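/- Let n ≥ 1 be an integer. Then for every integer k ≥ 0 and every real x, the polynomials η_i^{(n)} satisfy the triangular linear system Σ_{i=0}^{k} ( x^{k-i} / (k-i)! )·η_i^{(n)}(x) = [nx]_k / ( k!·(n)_k ), where [t]_k = t(t-1)⋯(t-k+1) is the falling factorial and (n)_k = n(n+1)⋯(n+k-1) is the rising factorial. Equivalently, the inverse Baskakov operator U_n = Σ_{r≥0} η_r^{(n)} D^r satisfies U_n x^k = [nx]_k/(n)_k. -/

import Mathlib

open Filter Topology Finset

/-- Baskakov basis functions `v_{k,n}(x) = C(n+k-1, k) x^k (1+x)^{-(n+k)}`. -/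
noncomputable def baskakovBasis (n k : ℕ) (x : ℝ) : ℝ :=
  (Nat.choose (n + k - 1) k : ℝ) * x ^ k / (1 + x) ^ (n + k)

/-- Baskakov operator `(V_n f)(x) = Σ_{k≥0} f(k/n) v_{k,n}(x)`. -/
noncomputable def baskakov (n : ℕ) (f : ℝ → ℝ) (x : ℝ) : ℝ :=
  ∑' k : ℕ, f ((k : ℝ) / n) * baskakovBasis n k x

/-- Polynomials θ_r^{(n)}: θ_0 = 1, θ_1 = 0 and
`n (r+1) θ_{r+1} = X (θ_r' + θ_{r-1})` for r ≥ 1, with X = x(1+x). -/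
noncomputable def theta (n : ℕ) : ℕ → ℝ → ℝ
  | 0 => fun _ => 1
  | 1 => fun _ => 0
  | r + 2 => fun x =>
      x * (1 + x) * (deriv (theta n (r + 1)) x + theta n r x) / (n * (r + 2))

/-- Polynomials η_r^{(n)}: η_0 = 1, η_1 = 0 and
`(n+r)(r+1) η_{r+1} = -r(1+2x) η_r - X η_{r-1}` for r ≥ 1, with X = x(1+x). -/
noncomputable def eta (n : ℕ) : ℕ → ℝ → ℝ
  | 0 => fun _ => 1
  | 1 => fun _ => 0
  | r + 2 => fun x =>
      (-((r + 1 : ℝ) * (1 + 2 * x) * eta n (r + 1) x) - x * (1 + x) * eta n r x) /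
        (((n : ℝ) + (r + 1)) * (r + 2))

/-- Rising factorial `(n)_r = n (n+1) ⋯ (n+r-1)`. -/
def risingFactorial (n r : ℕ) : ℕ := ∏ i ∈ Finset.range r, (n + i)

/-! The generating function `E(t) = Σ η_r t^r` satisfies, coefficientwise by the recurrence,
`t E'' + n E' + (1 + 2x) t E' + x(1 + x) t E = 0`. Multiplying by `e^{xt}`, the series
`F = E e^{xt}`, whose coefficients are the left-hand sides of the system, solves
`t F'' + (n + t) F' = n x F`: it is Kummer's function `M(-nx, n, -t)`. Comparing coefficients gives
`(k + 1)(n + k) F_{k+1} = (nx - k) F_k` with `F_0 = 1`, which telescopes to the closed form. -/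

open PowerSeries

theorem eta_recurrence (n r : ℕ) (x : ℝ) :
    ((n : ℝ) + (r + 1)) * (r + 2) * eta n (r + 2) x + (r + 1) * (1 + 2 * x) * eta n (r + 1) x
      + x * (1 + x) * eta n r x = 0 := by
  have hd : ((n : ℝ) + (r + 1)) * (r + 2) ≠ 0 := by positivity
  rw [eta, mul_div_cancel₀ _ hd]
  ring

theorem risingFactorial_succ (n k : ℕ) :
    risingFactorial n (k + 1) = risingFactorial n k * (n + k) :=
  prod_range_succ _ _

theorem eq_prod_div_of_recurrence {n : ℕ} (hn : 0 < n) {c : ℝ} {a : ℕ → ℝ} (h0 : a 0 = 1)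
    (hrec : ∀ k : ℕ, (k + 1) * (n + k) * a (k + 1) = (c - k) * a k) (k : ℕ) :
    a k = (∏ i ∈ range k, (c - i)) / (Nat.factorial k * risingFactorial n k) := by
  induction k with
  | zero => simp [h0, risingFactorial]
  | succ k ih =>
    have hnk : (n : ℝ) + k ≠ 0 := by positivity
    have hstep := hrec k
    rw [ih] at hstep
    rw [risingFactorial_succ, Nat.factorial_succ, prod_range_succ]
    push_cast
    field_simp
    field_simp at hstep
    linear_combination hstep

theorem coeff_X_mul_derivative {R : Type*} [CommSemiring R] (f : R⟦X⟧) (k : ℕ) :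
    coeff k (X * d⁄dX R f) = k * coeff k f := by
  cases k with
  | zero => simp
  | succ k => rw [coeff_succ_X_mul, coeff_derivative, mul_comm, Nat.cast_succ]

theorem coeff_succ_of_kummer_ode {R : Type*} [CommRing R] {a b : R} {F : R⟦X⟧}
    (hF : X * d⁄dX R (d⁄dX R F) + (C a + X) * d⁄dX R F = C b * F) (k : ℕ) :
    (k + 1) * (a + k) * coeff (k + 1) F = (b - k) * coeff k F := by
  have h := congrArg (coeff k) hF
  rw [add_mul, map_add, map_add, coeff_X_mul_derivative, coeff_C_mul, coeff_X_mul_derivative,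
    coeff_C_mul, coeff_derivative] at h
  linear_combination h

section RescaleExp

variable {K : Type*} [Field K] [CharZero K]

theorem coeff_rescale_exp (x : K) (k : ℕ) :
    coeff k (rescale x (exp K)) = x ^ k / Nat.factorial k := by
  simp [coeff_rescale, coeff_exp, div_eq_mul_inv]

theorem derivative_rescale_exp (x : K) :
    d⁄dX K (rescale x (exp K)) = C x * rescale x (exp K) := by
  ext k
  rw [coeff_derivative, coeff_C_mul, coeff_rescale_exp, coeff_rescale_exp, Nat.factorial_succ]
  push_cast
  field_simp
  ring

theorem kummer_ode_mul_rescale_exp {a x : K} {E : K⟦X⟧}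
    (hE : X * d⁄dX K (d⁄dX K E) + C a * d⁄dX K E + C (1 + 2 * x) * (X * d⁄dX K E)
      + C (x * (1 + x)) * (X * E) = 0) :
    X * d⁄dX K (d⁄dX K (E * rescale x (exp K))) + (C a + X) * d⁄dX K (E * rescale x (exp K))
      = C (a * x) * (E * rescale x (exp K)) := by
  simp only [Derivation.leibniz, derivative_rescale_exp, map_add, map_mul, smul_eq_mul,
    derivative_C, map_one, map_ofNat] at hE ⊢
  linear_combination rescale x (exp K) * hE

end RescaleExp

noncomputable def etaSeries (n : ℕ) (x : ℝ) : ℝ⟦X⟧ := mk fun r => eta n r x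

theorem etaSeries_ode (n : ℕ) (x : ℝ) :
    X * d⁄dX ℝ (d⁄dX ℝ (etaSeries n x)) + C (n : ℝ) * d⁄dX ℝ (etaSeries n x)
      + C (1 + 2 * x) * (X * d⁄dX ℝ (etaSeries n x))
      + C (x * (1 + x)) * (X * etaSeries n x) = 0 := by
  ext k
  rw [map_add, map_add, map_add, coeff_X_mul_derivative, coeff_C_mul, coeff_C_mul,
    coeff_X_mul_derivative, coeff_C_mul, map_zero]
  simp only [coeff_derivative, etaSeries, coeff_mk]
  rcases k with _ | r
  · simp [eta]
  · rw [coeff_succ_X_mul, coeff_mk]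
    push_cast
    linear_combination eta_recurrence n r x

theorem coeff_etaSeries_mul_rescale_exp (n : ℕ) (x : ℝ) (k : ℕ) :
    coeff k (etaSeries n x * rescale x (exp ℝ))
      = ∑ i ∈ range (k + 1), x ^ (k - i) / Nat.factorial (k - i) * eta n i x := by
  rw [coeff_mul, Nat.sum_antidiagonal_eq_sum_range_succ
    (fun i j => coeff i (etaSeries n x) * coeff j (rescale x (exp ℝ)))]
  simp only [etaSeries, coeff_mk, coeff_rescale_exp, mul_comm]

/-- the polynomials `η_i^{(n)}` solve the triangular linear system
`Σ_{i=0}^k x^{k-i}/(k-i)! η_i^{(n)}(x) = [nx]_k / (k! (n)_k)`, i.e. `U_n x^k = [nx]_k/(n)_k`. -/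
theorem eta_triangular_system (n : ℕ) (hn : 1 ≤ n) (k : ℕ) (x : ℝ) :
    ∑ i ∈ Finset.range (k + 1), x ^ (k - i) / (Nat.factorial (k - i) : ℝ) * eta n i x
      = (∏ i ∈ Finset.range k, ((n : ℝ) * x - i)) /
          ((Nat.factorial k : ℝ) * (risingFactorial n k : ℝ)) := by
  rw [← coeff_etaSeries_mul_rescale_exp]
  refine eq_prod_div_of_recurrence (a := fun j => coeff j (etaSeries n x * rescale x (exp ℝ)))
    hn ?_ (coeff_succ_of_kummer_ode (kummer_ode_mul_rescale_exp (etaSeries_ode n x))) k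
  simp [coeff_etaSeries_mul_rescale_exp, eta]
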